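/- arXiv:1101.0278 — 3 statements merged into one kernel-verified Lean document; each statement's English description precedes it below -/
import Mathlib

section
/- Fix an integer C, and for f ∈ ℤ[t,t⁻¹] let f*(t) = t^C · f(t⁻¹) and let T(f) be the unique Laurent polynomial with (1 − t)·T(f) = f − t·f*. Then for every f ∈ ℤ[t,t⁻¹]: (i) (T(f))* = T(f), and (ii) T(T(f)) = T(f), i.e. T is idempotent. -/
/-! Apply `*` to `(1 - t) g = f - t f*`: since `*` is an involution and `(1 - t)* = -t^{C-1} (1 - t)`,
one gets `(1 - t) g* = f - t f*` again, so `g* = g` after cancelling `1 - t`. Then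
`(1 - t) h = g - t g = (1 - t) g` forces `h = g`. -/

open LaurentPolynomial

/-- `f*(t) = t^C · f(t⁻¹)`, where `t ↦ t⁻¹` is the ring involution of `ℤ[t,t⁻¹]`. -/
noncomputable def fstar (C : ℤ) (f : LaurentPolynomial ℤ) : LaurentPolynomial ℤ :=
  T C * invert f

lemma LaurentPolynomial.one_sub_T_one_ne_zero {R : Type*} [Ring R] [Nontrivial R] :
    (1 - T 1 : R[T;T⁻¹]) ≠ 0 := by
  rw [sub_ne_zero, ← T_zero]
  intro h
  have h1 := congrArg (fun p : R[T;T⁻¹] => p.coeff 1) h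
  simp only [T_apply] at h1
  norm_num at h1

lemma LaurentPolynomial.invert_one_sub_T_one {R : Type*} [CommRing R] :
    invert (1 - T 1 : R[T;T⁻¹]) = -T (-1) * (1 - T 1) := by
  rw [map_sub, map_one, invert_T, mul_sub, mul_one, neg_mul, ← T_add, neg_add_cancel, T_zero]
  abel

lemma fstar_mul (C : ℤ) (p q : LaurentPolynomial ℤ) :
    fstar C (p * q) = invert p * fstar C q := by
  simp only [fstar, map_mul]
  ring

lemma fstar_fstar (C : ℤ) (f : LaurentPolynomial ℤ) : fstar C (fstar C f) = f := by
  rw [fstar, fstar, map_mul, invert_T, involutive_invert, ← mul_assoc, ← T_add, add_neg_cancel,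
    T_zero, one_mul]

lemma fstar_sub (C : ℤ) (p q : LaurentPolynomial ℤ) :
    fstar C (p - q) = fstar C p - fstar C q := by
  simp only [fstar, map_sub, mul_sub]

lemma fstar_eq_self_of_one_sub_T_mul_eq (C : ℤ) {f g : LaurentPolynomial ℤ}
    (hg : (1 - T 1) * g = f - T 1 * fstar C f) : fstar C g = g := by
  have hstar : -T (-1) * ((1 - T 1) * fstar C g) = fstar C f - T (-1) * f := by
    calc -T (-1) * ((1 - T 1) * fstar C g) = fstar C ((1 - T 1) * g) := by
          rw [fstar_mul, invert_one_sub_T_one, mul_assoc]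
      _ = fstar C f - T (-1) * f := by
          rw [hg, fstar_sub, fstar_mul, fstar_fstar, invert_T]
  have hTT : (T 1 * T (-1) : LaurentPolynomial ℤ) = 1 := by rw [← T_add, add_neg_cancel, T_zero]
  refine mul_left_cancel₀ one_sub_T_one_ne_zero ?_
  rw [hg]
  linear_combination (-T 1) * hstar + (f - (1 - T 1) * fstar C g) * hTT

/-- Fix an integer `C`; `T(f)` denotes the unique Laurent polynomial with
`(1 − t)·T(f) = f − t·f*`.  Then (i) `(T(f))* = T(f)`, and (ii) `T(T(f)) = T(f)`:
any `h` with `(1 − t)·h = T(f) − t·(T(f))*` equals `T(f)`. -/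
theorem stmt_6 (C : ℤ) (f g : LaurentPolynomial ℤ)
    (hg : (1 - T 1) * g = f - T 1 * fstar C f) :
    fstar C g = g ∧ ∀ h : LaurentPolynomial ℤ, (1 - T 1) * h = g - T 1 * fstar C g → h = g := by
  have hfix := fstar_eq_self_of_one_sub_T_mul_eq C hg
  refine ⟨hfix, fun h hh => mul_left_cancel₀ one_sub_T_one_ne_zero ?_⟩
  rw [hh, hfix]
  ring
end

section
/- Let m ≥ 1 and let μ₁,…,μ_m, ν₁,…,ν_m be integers with μ_k ≤ ν_k for all k. Let Γ = {y ∈ Π : y₁ = μ₁} be the face of Π given by y₁ = μ₁ (which may equal Π if μ₁ = ν₁), and set C = ∑_{k=1}^m (μ_k + ν_k). Then S_Π = T(S_Γ); equivalently, (1 − t)·S_Π(t) = S_Γ(t) − t^{C+1}·S_Γ(t⁻¹) in ℤ[t,t⁻¹]. -/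
open LaurentPolynomial

/-- `S_Π(t) = ∑_{y ∈ Π ∩ ℤ^m} t^{σ(y)}`. -/
noncomputable def SPi {m : ℕ} (μ ν : Fin m → ℤ) : LaurentPolynomial ℤ :=
  ∑ y ∈ Finset.Icc μ ν, T (∑ k, y k)

/-- `S_Γ(t) = ∑_{y ∈ Γ ∩ ℤ^m} t^{σ(y)}`, where `Γ = {y ∈ Π : y₁ = μ₁}`. -/
noncomputable def SGamma {m : ℕ} (hm : 1 ≤ m) (μ ν : Fin m → ℤ) : LaurentPolynomial ℤ :=
  ∑ y ∈ (Finset.Icc μ ν).filter (fun y => y ⟨0, hm⟩ = μ ⟨0, hm⟩), T (∑ k, y k)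

/-- With `C = ∑ (μ_k + ν_k)` and `Γ = {y ∈ Π : y₁ = μ₁}`, one has `S_Π = T(S_Γ)`;
equivalently `(1 − t)·S_Π(t) = S_Γ(t) − t^{C+1}·S_Γ(t⁻¹)` in `ℤ[t,t⁻¹]`. -/
theorem stmt_7 (m : ℕ) (hm : 1 ≤ m) (μ ν : Fin m → ℤ) (h : ∀ k, μ k ≤ ν k) :
    (1 - T 1) * SPi μ ν =
      SGamma hm μ ν - T ((∑ k, (μ k + ν k)) + 1) * invert (SGamma hm μ ν) := by
  classical
  set i0 : Fin m := ⟨0, hm⟩ with hi0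
  have hmem : ∀ y : Fin m → ℤ, y ∈ Finset.Icc μ ν ↔ ∀ k, μ k ≤ y k ∧ y k ≤ ν k := by
    intro y
    simp [Finset.mem_Icc, Pi.le_def, forall_and]
  -- RHS: reflection bijection
  have hRHS : T ((∑ k, (μ k + ν k)) + 1) * invert (SGamma hm μ ν)
      = ∑ y ∈ (Finset.Icc μ ν).filter (fun y => y i0 = ν i0), T ((∑ k, y k) + 1) := by
    unfold SGamma
    rw [map_sum, Finset.mul_sum]
    refine Finset.sum_nbij' (fun y k => μ k + ν k - y k) (fun y k => μ k + ν k - y k)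
      ?_ ?_ ?_ ?_ ?_
    · intro y hy
      simp only [Finset.mem_filter, hmem] at hy ⊢
      refine ⟨fun k => ⟨by linarith [(hy.1 k).2], by linarith [(hy.1 k).1]⟩, by
        have := hy.2; show μ ⟨0, hm⟩ + ν ⟨0, hm⟩ - y ⟨0, hm⟩ = ν ⟨0, hm⟩; omega⟩
    · intro y hy
      simp only [Finset.mem_filter, hmem] at hy ⊢
      refine ⟨fun k => ⟨by linarith [(hy.1 k).2], by linarith [(hy.1 k).1]⟩, by
        have h2 : y ⟨0, hm⟩ = ν ⟨0, hm⟩ := hy.2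
        show μ ⟨0, hm⟩ + ν ⟨0, hm⟩ - y ⟨0, hm⟩ = μ ⟨0, hm⟩; omega⟩
    · intro y _; funext k; ring
    · intro y _; funext k; ring
    · intro y hy
      rw [invert_T, ← T_add]
      congr 1
      rw [Finset.sum_sub_distrib]
      ring
  rw [hRHS]
  -- LHS
  have hLHS : (1 - T 1) * SPi μ ν
      = (∑ y ∈ Finset.Icc μ ν, T (∑ k, y k))
        - ∑ y ∈ Finset.Icc μ ν, T ((∑ k, y k) + 1) := by
    unfold SPi
    rw [sub_mul, one_mul, Finset.mul_sum]
    congr 1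
    refine Finset.sum_congr rfl fun y _ => ?_
    rw [← T_add]; ring_nf
  rw [hLHS]
  -- split
  rw [← Finset.sum_filter_add_sum_filter_not (Finset.Icc μ ν) (fun y => y i0 = μ i0)
      (fun y => T (∑ k, y k)),
    ← Finset.sum_filter_add_sum_filter_not (Finset.Icc μ ν) (fun y => y i0 = ν i0)
      (fun y => T ((∑ k, y k) + 1))]
  have hshift : (∑ y ∈ (Finset.Icc μ ν).filter (fun y => ¬ y i0 = μ i0),
        (T (∑ k, y k) : LaurentPolynomial ℤ))
      = ∑ y ∈ (Finset.Icc μ ν).filter (fun y => ¬ y i0 = ν i0), T ((∑ k, y k) + 1) := by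
    refine Finset.sum_nbij' (fun y => Function.update y i0 (y i0 - 1))
      (fun y => Function.update y i0 (y i0 + 1)) ?_ ?_ ?_ ?_ ?_
    · intro y hy
      simp only [Finset.mem_filter, hmem] at hy ⊢
      obtain ⟨h1, h2⟩ := hy
      constructor
      · intro k
        by_cases hk : k = i0
        · subst hk; simp only [Function.update_self]
          have h3 := h1 i0
          exact ⟨by omega, by omega⟩
        · rw [Function.update_of_ne hk]; exact h1 k
      · simp only [Function.update_self]
        have := (h1 i0).2; omega
    · intro y hy
      simp only [Finset.mem_filter, hmem] at hy ⊢
      obtain ⟨h1, h2⟩ := hy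
      constructor
      · intro k
        by_cases hk : k = i0
        · subst hk; simp only [Function.update_self]
          have h3 := h1 i0
          exact ⟨by omega, by omega⟩
        · rw [Function.update_of_ne hk]; exact h1 k
      · simp only [Function.update_self]
        have := (h1 i0).1; omega
    · intro y _
      funext k
      by_cases hk : k = i0
      · subst hk; simp
      · simp [Function.update_of_ne hk]
    · intro y _
      funext k
      by_cases hk : k = i0
      · subst hk; simp
      · simp [Function.update_of_ne hk]
    · intro y hy
      congr 1
      rw [Finset.sum_update_of_mem (Finset.mem_univ i0)]
      rw [← Finset.sum_erase_add _ _ (Finset.mem_univ i0),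
        Finset.sdiff_singleton_eq_erase]
      ring
  rw [hshift]
  have hSG : SGamma hm μ ν
      = ∑ y ∈ (Finset.Icc μ ν).filter (fun y => y i0 = μ i0), T (∑ k, y k) := rfl
  rw [hSG]
  abel
end

section
/- Let m, k ≥ 1, let μ₁,…,μ_m, ν₁,…,ν_m be integers with μ_j ≤ ν_j for all j, let Π = {y ∈ ℝ^m : μ_j ≤ y_j ≤ ν_j}, Γ = {y ∈ Π : y₁ = μ₁}, and C = ∑_{j=1}^m (μ_j + ν_j). Let Λ : ℝ^k → ℝ^m be a linear map with Λ(ℤ^k) ⊆ ℤ^m such that σ ∘ Λ = σ, where σ denotes the sum of all coordinates on ℝ^k and on ℝ^m respectively. Suppose A, B ⊆ ℝ^k are subsets such that Λ restricts to a bijection from B ∩ ℤ^k onto Π ∩ ℤ^m and to a bijection from A ∩ ℤ^k onto Γ ∩ ℤ^m. Then ∑_{z ∈ B ∩ ℤ^k} t^{σ(z)} = T(∑_{z ∈ A ∩ ℤ^k} t^{σ(z)}); equivalently, (1 − t)·∑_{z ∈ B ∩ ℤ^k} t^{σ(z)} = ∑_{z ∈ A ∩ ℤ^k} t^{σ(z)}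 − t^{C+1}·∑_{z ∈ A ∩ ℤ^k} t^{−σ(z)} in ℤ[t,t⁻¹]. -/
/-!
Since `Λ` preserves `σ`, transport along it turns the three sums into sums over the integer
box `Π ∩ ℤ^m` and its face `Γ ∩ ℤ^m`, which is again a box: its upper corner `ν'` agrees with `ν`
except that `ν'₁ = μ₁`. A box sum factors as `∏ⱼ (t^{μⱼ} + ⋯ + t^{νⱼ})`, so the face sum is the
box sum with its first factor replaced by `t^{μ₁}`, and the reflection `w ↦ μ + ν' - w` of the
face gives `∑_Γ t^{-σ} = t^{-σ(μ + ν')} ∑_Γ t^{σ}`. The identity then reduces to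
`(1 - t)(t^{μ₁} + ⋯ + t^{ν₁}) = t^{μ₁} - t^{ν₁ + 1}`.
-/

open LaurentPolynomial

/-- The integer lattice `ℤ^k ⊆ ℝ^k`. -/
def lattice (k : ℕ) : Set (Fin k → ℝ) := Set.range (fun (z : Fin k → ℤ) (i : Fin k) => (z i : ℝ))

namespace LaurentPolynomial

variable {R : Type*} [CommSemiring R]

theorem T_sum {α : Type*} (s : Finset α) (f : α → ℤ) :
    (T (∑ i ∈ s, f i) : R[T;T⁻¹]) = ∏ i ∈ s, T (f i) :=
  map_sum (AddMonoidAlgebra.of R ℤ |>.toAdditiveRight) f s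

end LaurentPolynomial

section BoxSum

variable {R : Type*} {ι : Type*} [Fintype ι] [DecidableEq ι]

theorem sum_Icc_T_sum_eq_prod [CommSemiring R] (μ ν : ι → ℤ) :
    ∑ w ∈ Finset.Icc μ ν, (T (∑ j, w j) : R[T;T⁻¹]) =
      ∏ j, ∑ a ∈ Finset.Icc (μ j) (ν j), T a := by
  rw [Pi.Icc_eq, Finset.prod_univ_sum]
  exact Finset.sum_congr rfl fun w _ => T_sum _ _

theorem sum_Icc_T_neg_sum [CommSemiring R] (μ ν : ι → ℤ) :
    ∑ w ∈ Finset.Icc μ ν, (T (-∑ j, w j) : R[T;T⁻¹]) =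
      T (-∑ j, (μ j + ν j)) * ∑ w ∈ Finset.Icc μ ν, T (∑ j, w j) := by
  have hreflect : ∀ w ∈ Finset.Icc μ ν, μ + ν - w ∈ Finset.Icc μ ν := by
    intro w hw
    simp only [Finset.mem_Icc, Pi.le_def, Pi.sub_apply, Pi.add_apply] at hw ⊢
    exact ⟨fun j => by linarith [hw.2 j], fun j => by linarith [hw.1 j]⟩
  rw [Finset.mul_sum]
  refine Finset.sum_nbij' (fun w => μ + ν - w) (fun w => μ + ν - w) hreflect hreflect
    (fun w _ => sub_sub_cancel _ w) (fun w _ => sub_sub_cancel _ w) fun w _ => ?_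
  rw [← T_add]
  congr 1
  simp only [Pi.sub_apply, Pi.add_apply, Finset.sum_sub_distrib, Finset.sum_add_distrib]
  ring

theorem one_sub_T_one_mul_sum_Icc [CommRing R] {p q : ℤ} (h : p ≤ q) :
    ((1 : R[T;T⁻¹]) - T 1) * ∑ a ∈ Finset.Icc p q, T a = T p - T (q + 1) := by
  induction q, h using Int.leInduction with
  | base => rw [Finset.Icc_self, Finset.sum_singleton, add_comm, T_add]; ring
  | succ q hpq ih =>
    rw [← Order.succ_eq_add_one, ← Finset.insert_Icc_right_eq_Icc_succ (hpq.trans (Order.le_succ q)),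
      Finset.sum_insert (by simp), mul_add, ih, Order.succ_eq_add_one, T_add (q + 1) 1]
    ring

theorem one_sub_T_one_mul_sum_Icc_T_sum [CommRing R] {μ ν : ι → ℤ} (i₀ : ι)
    (h : μ i₀ ≤ ν i₀) :
    ((1 : R[T;T⁻¹]) - T 1) * ∑ w ∈ Finset.Icc μ ν, T (∑ j, w j) =
      ∑ w ∈ Finset.Icc μ (Function.update ν i₀ (μ i₀)), T (∑ j, w j) -
        T (∑ j, (μ j + ν j) + 1) *
          ∑ w ∈ Finset.Icc μ (Function.update ν i₀ (μ i₀)), T (-∑ j, w j) := by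
  set ν' := Function.update ν i₀ (μ i₀)
  have hσ : ∑ j, (μ j + ν j) + 1 + -∑ j, (μ j + ν' j) = ν i₀ + 1 - μ i₀ := by
    simp only [ν', Finset.sum_add_distrib, Finset.sum_update_of_mem (Finset.mem_univ i₀),
      ← Finset.add_sum_erase _ ν (Finset.mem_univ i₀), Finset.sdiff_singleton_eq_erase]
    ring
  set P := ∏ j ∈ Finset.univ.erase i₀, ∑ a ∈ Finset.Icc (μ j) (ν j), (T a : R[T;T⁻¹])
  have hbox : ∑ w ∈ Finset.Icc μ ν, (T (∑ j, w j) : R[T;T⁻¹]) =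
      (∑ a ∈ Finset.Icc (μ i₀) (ν i₀), T a) * P := by
    rw [sum_Icc_T_sum_eq_prod, ← Finset.mul_prod_erase _ _ (Finset.mem_univ i₀)]
  have hface : ∑ w ∈ Finset.Icc μ ν', (T (∑ j, w j) : R[T;T⁻¹]) = T (μ i₀) * P := by
    rw [sum_Icc_T_sum_eq_prod, ← Finset.mul_prod_erase _ _ (Finset.mem_univ i₀)]
    simp only [ν', Function.update_self, Finset.Icc_self, Finset.sum_singleton]
    congr 1
    exact Finset.prod_congr rfl fun j hj => by
      rw [Function.update_of_ne (Finset.ne_of_mem_erase hj)]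
  rw [sum_Icc_T_neg_sum, ← mul_assoc, ← T_add, hσ, hface, hbox, ← mul_assoc,
    one_sub_T_one_mul_sum_Icc h, T_sub]
  have hunit : (T (-μ i₀) : R[T;T⁻¹]) * T (μ i₀) = 1 := by
    rw [← T_add, neg_add_cancel, T_zero]
  linear_combination (T (ν i₀ + 1) * P) * hunit

end BoxSum

section IntegerPoints

variable {ι : Type*}

theorem setOf_intCast_mem_box (μ ν : ι → ℤ) :
    {w : ι → ℤ | (fun j => (w j : ℝ)) ∈ {x : ι → ℝ | ∀ j, (μ j : ℝ) ≤ x j ∧ x j ≤ ν j}} =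
      Set.Icc μ ν := by
  ext w
  simp only [Set.mem_ofPred_eq, Set.mem_Icc, Pi.le_def, Int.cast_le, forall_and]

theorem setOf_intCast_mem_box_face [DecidableEq ι] {μ ν : ι → ℤ} (i₀ : ι) (h : μ i₀ ≤ ν i₀) :
    {w : ι → ℤ | (fun j => (w j : ℝ)) ∈ {x : ι → ℝ | ∀ j, (μ j : ℝ) ≤ x j ∧ x j ≤ ν j} ∩
        {x : ι → ℝ | x i₀ = (μ i₀ : ℝ)}} =
      Set.Icc μ (Function.update ν i₀ (μ i₀)) := by
  ext w
  rw [Set.mem_Icc, le_update_iff]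
  simp only [Set.mem_ofPred_eq, Set.mem_inter_iff, Pi.le_def, Int.cast_le, Int.cast_inj,
    forall_and]
  constructor
  · rintro ⟨⟨hμw, hwν⟩, hw₀⟩
    exact ⟨hμw, hw₀.le, fun j _ => hwν j⟩
  · rintro ⟨hμw, hw₀, hwν⟩
    have hw₀ : w i₀ = μ i₀ := le_antisymm hw₀ (hμw i₀)
    refine ⟨⟨hμw, fun j => ?_⟩, hw₀⟩
    rcases eq_or_ne j i₀ with rfl | hj
    · exact hw₀ ▸ h
    · exact hwν j hj

variable {k m : ℕ} {f : (Fin k → ℝ) → (Fin m → ℝ)} {A : Set (Fin k → ℝ)} {W : Set (Fin m → ℝ)}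

theorem bijOn_of_bijOn_lattice {L : (Fin k → ℤ) → (Fin m → ℤ)}
    (hL : ∀ z, f (fun i => (z i : ℝ)) = fun j => (L z j : ℝ))
    (h : Set.BijOn f (A ∩ lattice k) (W ∩ lattice m)) :
    Set.BijOn L {z | (fun i => (z i : ℝ)) ∈ A} {w | (fun j => (w j : ℝ)) ∈ W} := by
  have hcast {n : ℕ} : Function.Injective fun (z : Fin n → ℤ) (i : Fin n) => (z i : ℝ) :=
    Int.cast_injective.comp_left
  refine ⟨fun z hz => ?_, fun z₁ hz₁ z₂ hz₂ hL₁₂ => ?_, fun w hw => ?_⟩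
  · simpa only [Set.mem_ofPred_eq, hL] using (h.mapsTo ⟨hz, z, rfl⟩).1
  · refine hcast (h.injOn ⟨hz₁, z₁, rfl⟩ ⟨hz₂, z₂, rfl⟩ ?_)
    rw [hL, hL, hL₁₂]
  · obtain ⟨_, ⟨hzA, z, rfl⟩, hzw⟩ := h.surjOn ⟨hw, w, rfl⟩
    exact ⟨z, hzA, hcast ((hL z).symm.trans hzw)⟩

theorem finsum_mem_lattice_eq {M : Type*} [AddCommMonoid M] (g : ℤ → M)
    (hint : ∀ z : Fin k → ℤ, ∃ w : Fin m → ℤ, f (fun i => (z i : ℝ)) = fun j => (w j : ℝ))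
    (hσ : ∀ x, ∑ j, f x j = ∑ i, x i)
    (h : Set.BijOn f (A ∩ lattice k) (W ∩ lattice m)) :
    ∑ᶠ z ∈ {z : Fin k → ℤ | (fun i => (z i : ℝ)) ∈ A}, g (∑ i, z i) =
      ∑ᶠ w ∈ {w : Fin m → ℤ | (fun j => (w j : ℝ)) ∈ W}, g (∑ j, w j) := by
  choose L hL using hint
  refine finsum_mem_eq_of_bijOn L (bijOn_of_bijOn_lattice hL h) fun z _ => congrArg g ?_
  have hσL : ((∑ j, L z j : ℤ) : ℝ) = ∑ i, (z i : ℝ) := by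
    push_cast
    rw [← hσ, hL]
  exact_mod_cast hσL.symm

end IntegerPoints

theorem stmt_8_general (m k : ℕ) (hm : 1 ≤ m) (μ ν : Fin m → ℤ)
    (hμν : ∀ j, μ j ≤ ν j)
    (Λ : (Fin k → ℝ) →ₗ[ℝ] (Fin m → ℝ))
    (hΛint : ∀ z : Fin k → ℤ, ∃ w : Fin m → ℤ,
      Λ (fun i => (z i : ℝ)) = fun j => (w j : ℝ))
    (hΛσ : ∀ x : Fin k → ℝ, ∑ j, Λ x j = ∑ i, x i)
    (A B : Set (Fin k → ℝ))
    (hB : Set.BijOn Λ (B ∩ lattice k)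
      ({x : Fin m → ℝ | ∀ j, (μ j : ℝ) ≤ x j ∧ x j ≤ ν j} ∩ lattice m))
    (hA : Set.BijOn Λ (A ∩ lattice k)
      (({x : Fin m → ℝ | ∀ j, (μ j : ℝ) ≤ x j ∧ x j ≤ ν j} ∩
        {x : Fin m → ℝ | x ⟨0, hm⟩ = (μ ⟨0, hm⟩ : ℝ)}) ∩ lattice m)) :
    ((1 : LaurentPolynomial ℤ) - T 1) * (∑ᶠ z ∈ {z : Fin k → ℤ | (fun i => (z i : ℝ)) ∈ B}, T (∑ i, z i)) =
      (∑ᶠ z ∈ {z : Fin k → ℤ | (fun i => (z i : ℝ)) ∈ A}, T (∑ i, z i)) -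
        T ((∑ j, (μ j + ν j)) + 1) *
          (∑ᶠ z ∈ {z : Fin k → ℤ | (fun i => (z i : ℝ)) ∈ A}, T (-∑ i, z i)) := by
  have h₀ := hμν ⟨0, hm⟩
  rw [finsum_mem_lattice_eq T hΛint hΛσ hB, finsum_mem_lattice_eq T hΛint hΛσ hA,
    finsum_mem_lattice_eq (fun n => T (-n)) hΛint hΛσ hA, setOf_intCast_mem_box,
    setOf_intCast_mem_box_face _ h₀, ← Finset.coe_Icc, ← Finset.coe_Icc,
    finsum_mem_coe_finset, finsum_mem_coe_finset, finsum_mem_coe_finset]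
  exact one_sub_T_one_mul_sum_Icc_T_sum _ h₀

/-- if `Λ : ℝ^k → ℝ^m` is linear, maps `ℤ^k` into `ℤ^m`, preserves the sum of
coordinates, and restricts to bijections `B ∩ ℤ^k → Π ∩ ℤ^m` and `A ∩ ℤ^k → Γ ∩ ℤ^m`
(where `Π = {μ ≤ y ≤ ν}`, `Γ = {y ∈ Π : y₁ = μ₁}`), then, with `C = ∑ (μ_j + ν_j)`,
`(1 − t)·∑_{z ∈ B ∩ ℤ^k} t^{σ(z)} = ∑_{z ∈ A ∩ ℤ^k} t^{σ(z)} − t^{C+1}·∑_{z ∈ A ∩ ℤ^k} t^{−σ(z)}`,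
i.e. `∑_{B ∩ ℤ^k} t^{σ(z)} = T(∑_{A ∩ ℤ^k} t^{σ(z)})`. -/
theorem stmt_8 (m k : ℕ) (hm : 1 ≤ m) (hk : 1 ≤ k) (μ ν : Fin m → ℤ)
    (hμν : ∀ j, μ j ≤ ν j)
    (Λ : (Fin k → ℝ) →ₗ[ℝ] (Fin m → ℝ))
    (hΛint : ∀ z : Fin k → ℤ, ∃ w : Fin m → ℤ,
      Λ (fun i => (z i : ℝ)) = fun j => (w j : ℝ))
    (hΛσ : ∀ x : Fin k → ℝ, ∑ j, Λ x j = ∑ i, x i)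
    (A B : Set (Fin k → ℝ))
    (hB : Set.BijOn Λ (B ∩ lattice k)
      ({x : Fin m → ℝ | ∀ j, (μ j : ℝ) ≤ x j ∧ x j ≤ ν j} ∩ lattice m))
    (hA : Set.BijOn Λ (A ∩ lattice k)
      (({x : Fin m → ℝ | ∀ j, (μ j : ℝ) ≤ x j ∧ x j ≤ ν j} ∩
        {x : Fin m → ℝ | x ⟨0, hm⟩ = (μ ⟨0, hm⟩ : ℝ)}) ∩ lattice m)) :
    ((1 : LaurentPolynomial ℤ) - T 1) * (∑ᶠ z ∈ {z : Fin k → ℤ | (fun i => (z i : ℝ)) ∈ B}, T (∑ i, z i)) =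
      (∑ᶠ z ∈ {z : Fin k → ℤ | (fun i => (z i : ℝ)) ∈ A}, T (∑ i, z i)) -
        T ((∑ j, (μ j + ν j)) + 1) *
          (∑ᶠ z ∈ {z : Fin k → ℤ | (fun i => (z i : ℝ)) ∈ A}, T (-∑ i, z i)) :=
  stmt_8_general m k hm μ ν hμν Λ hΛint hΛσ A B hB hA
end
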